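/- In a cell complex, a face A with boundary (X_1 X_2 b Y b^{-1}) is equivalent to a face A' with boundary (X_2 X_1 c Y c^{-1}) for a fresh edge c; i.e., the two 'boundary components' X_1X_2 and Y may be reconnected after an arbitrary cyclic permutation of X_1X_2. -/

import Mathlib

/-!
Rotate the face to `(b⁻¹ X₁ X₂ b Y)`, cut it along `c` into `(b⁻¹ X₁ c)` and `(c⁻¹ X₂ b Y)`,
rotate the second piece to `(Y c⁻¹ X₂ b)` and glue the two pieces back together along `b`: the
result `(Y c⁻¹ X₂ X₁ c)` is a rotation of `(X₂ X₁ c Y c⁻¹)`. The cut needs `c ≠ b`, so in general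
the surgery is done twice: first onto an edge `d` fresh for everything, then (with `X₂` empty)
from `d` onto `c`.
-/

/-- An oriented edge: an edge name together with an orientation. -/
abbrev OEdge := ℕ × Bool

/-- A boundary word of a face (read cyclically). -/
abbrev CWord := List OEdge

/-- A cell complex, presented by a choice of boundary word for each face. -/
abbrev PreCell := Multiset CWord

/-- The inverse of an oriented edge. -/
def oinv (x : OEdge) : OEdge := (x.1, !x.2)

/-- The inverse of a boundary word. -/
def winv (w : CWord) : CWord := (w.map oinv).reverse

/-- The edge `e` occurs (in some orientation) in the word `w`. -/
def occursW (e : ℕ) (w : CWord) : Prop := ∃ b, (e, b) ∈ w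

/-- The edge `e` occurs in the complex `C`. -/
def occursC (e : ℕ) (C : PreCell) : Prop := ∃ w ∈ C, occursW e w

/-- The total number of occurrences of the edge `e` (in either orientation) among the
boundary words of `C`. -/
def occCount (e : ℕ) (C : PreCell) : ℕ :=
  (C.map fun w => w.countP fun p => p.1 == e).sum

/-- `(F, E, B)` is a cell complex: every (oriented) edge appears at most twice in total
among the chosen boundary words. -/
def IsCellComplex (C : PreCell) : Prop := ∀ e : ℕ, occCount e C ≤ 2

/-- Substitution used in an elementary subdivision: replace the edge `a` by the two-letter
word `bc` (and `a⁻¹` by `c⁻¹b⁻¹`). -/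
def substEdge (a b c : ℕ) (p : OEdge) : CWord :=
  if p.1 = a then (if p.2 then [(b, true), (c, true)] else [(c, false), (b, false)])
  else [p]

/-- The elementary moves on cell complexes: cyclic rotation of a boundary word, replacing a
face by its inverse, splitting a face `(XY)` into `(Xa) + (a⁻¹Y)` along a fresh edge `a`,
and subdividing an edge `a` into a word `bc` of fresh edges. -/
inductive ElemMove : PreCell → PreCell → Prop
  | rot (w₁ w₂ : CWord) (C : PreCell) :
      ElemMove ((w₁ ++ w₂) ::ₘ C) ((w₂ ++ w₁) ::ₘ C)
  | invert (w : CWord) (C : PreCell) :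
      ElemMove (w ::ₘ C) (winv w ::ₘ C)
  | split (Xw Yw : CWord) (a : ℕ) (C : PreCell)
      (haX : ¬ occursW a Xw) (haY : ¬ occursW a Yw) (haC : ¬ occursC a C) :
      ElemMove ((Xw ++ Yw) ::ₘ C)
        ((Xw ++ [(a, true)]) ::ₘ ((a, false) :: Yw) ::ₘ C)
  | subdivide (a b c : ℕ) (C : PreCell)
      (hb : ¬ occursC b C) (hc : ¬ occursC c C) (hbc : b ≠ c) :
      ElemMove C (C.map fun w => w.flatMap (substEdge a b c))

/-- Equivalence of cell complexes: the least equivalence relation generated by the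
elementary moves (elementary subdivisions and their inverses). -/
def CellEquiv : PreCell → PreCell → Prop := Relation.EqvGen ElemMove

@[simp]
theorem occursW_nil (e : ℕ) : ¬ occursW e ([] : CWord) := by
  simp [occursW]

@[simp]
theorem occursW_cons {e f : ℕ} {x : Bool} {w : CWord} :
    occursW e ((f, x) :: w) ↔ e = f ∨ occursW e w := by
  simp [occursW, Prod.ext_iff, exists_or]

@[simp]
theorem occursW_append {e : ℕ} {w₁ w₂ : CWord} :
    occursW e (w₁ ++ w₂) ↔ occursW e w₁ ∨ occursW e w₂ := by
  simp [occursW, exists_or]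

@[simp]
theorem occursC_cons {e : ℕ} {w : CWord} {C : PreCell} :
    occursC e (w ::ₘ C) ↔ occursW e w ∨ occursC e C := by
  simp [occursC]

theorem exists_not_occursC (C : PreCell) : ∃ e, ¬ occursC e C := by
  obtain ⟨e, he⟩ :=
    Infinite.exists_notMem_finset (C.bind fun w => (w.map Prod.fst : Multiset ℕ)).toFinset
  refine ⟨e, fun ⟨w, hw, x, hx⟩ => he ?_⟩
  simp only [Multiset.mem_toFinset, Multiset.mem_bind]
  exact ⟨w, hw, by simpa using List.mem_map_of_mem (f := Prod.fst) hx⟩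

infix:50 " ≈c " => CellEquiv

instance : Trans CellEquiv CellEquiv CellEquiv :=
  ⟨Relation.EqvGen.trans _ _ _⟩

theorem CellEquiv.rot (w₁ w₂ : CWord) (C : PreCell) :
    CellEquiv ((w₁ ++ w₂) ::ₘ C) ((w₂ ++ w₁) ::ₘ C) :=
  .rel _ _ (.rot w₁ w₂ C)

theorem CellEquiv.split {X Y : CWord} {a : ℕ} {C : PreCell}
    (haX : ¬ occursW a X) (haY : ¬ occursW a Y) (haC : ¬ occursC a C) :
    CellEquiv ((X ++ Y) ::ₘ C) ((X ++ [(a, true)]) ::ₘ ((a, false) :: Y) ::ₘ C) :=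
  .rel _ _ (.split X Y a C haX haY haC)

theorem CellEquiv.merge {X Y : CWord} {a : ℕ} {C : PreCell}
    (haX : ¬ occursW a X) (haY : ¬ occursW a Y) (haC : ¬ occursC a C) :
    CellEquiv ((X ++ [(a, true)]) ::ₘ ((a, false) :: Y) ::ₘ C) ((X ++ Y) ::ₘ C) :=
  .symm _ _ (CellEquiv.split haX haY haC)

theorem CellEquiv.reconnect_of_ne {X₁ X₂ Y : CWord} {b c : ℕ} {C : PreCell} (hbc : b ≠ c)
    (hbX₁ : ¬ occursW b X₁) (hbX₂ : ¬ occursW b X₂) (hbY : ¬ occursW b Y)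
    (hbC : ¬ occursC b C)
    (hcX₁ : ¬ occursW c X₁) (hcX₂ : ¬ occursW c X₂) (hcY : ¬ occursW c Y)
    (hcC : ¬ occursC c C) :
    CellEquiv ((X₁ ++ X₂ ++ [(b, true)] ++ Y ++ [(b, false)]) ::ₘ C)
      ((X₂ ++ X₁ ++ [(c, true)] ++ Y ++ [(c, false)]) ::ₘ C) :=
  calc (X₁ ++ X₂ ++ [(b, true)] ++ Y ++ [(b, false)]) ::ₘ C
    _ ≈c ((b, false) :: X₁ ++ X₂ ++ (b, true) :: Y) ::ₘ C := by
      simpa using CellEquiv.rot (X₁ ++ X₂ ++ [(b, true)] ++ Y) [(b, false)] C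
    _ ≈c ((b, false) :: X₁ ++ [(c, true)]) ::ₘ ((c, false) :: X₂ ++ (b, true) :: Y) ::ₘ C := by
      simpa using CellEquiv.split (X := (b, false) :: X₁) (Y := X₂ ++ (b, true) :: Y)
        (by simp [hcX₁, hbc.symm]) (by simp [hcX₂, hcY, hbc.symm]) hcC
    _ ≈c (Y ++ (c, false) :: X₂ ++ [(b, true)]) ::ₘ ((b, false) :: X₁ ++ [(c, true)]) ::ₘ C := by
      rw [Multiset.cons_swap]
      simpa using CellEquiv.rot ((c, false) :: X₂ ++ [(b, true)]) Y _
    _ ≈c (Y ++ (c, false) :: X₂ ++ X₁ ++ [(c, true)]) ::ₘ C := by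
      simpa using CellEquiv.merge (X := Y ++ (c, false) :: X₂) (Y := X₁ ++ [(c, true)])
        (by simp [hbY, hbX₂, hbc]) (by simp [hbX₁, hbc]) hbC
    _ ≈c (X₂ ++ X₁ ++ [(c, true)] ++ Y ++ [(c, false)]) ::ₘ C := by
      simpa using CellEquiv.rot (Y ++ [(c, false)]) (X₂ ++ X₁ ++ [(c, true)]) C

theorem reconnect_boundary_components_general (X₁ X₂ Yw : CWord) (b c : ℕ) (C : PreCell)
    (hbX₁ : ¬ occursW b X₁) (hbX₂ : ¬ occursW b X₂) (hbY : ¬ occursW b Yw)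
    (hbC : ¬ occursC b C)
    (hcX₁ : ¬ occursW c X₁) (hcX₂ : ¬ occursW c X₂) (hcY : ¬ occursW c Yw)
    (hcC : ¬ occursC c C) :
    CellEquiv ((X₁ ++ X₂ ++ [(b, true)] ++ Yw ++ [(b, false)]) ::ₘ C)
      ((X₂ ++ X₁ ++ [(c, true)] ++ Yw ++ [(c, false)]) ::ₘ C) := by
  obtain ⟨d, hd⟩ := exists_not_occursC ([(b, true), (c, true)] ::ₘ (X₁ ++ X₂ ++ Yw) ::ₘ C)
  simp only [occursC_cons, occursW_append, occursW_cons, occursW_nil, not_or, or_false] at hd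
  obtain ⟨⟨hdb, hdc⟩, ⟨⟨hdX₁, hdX₂⟩, hdY⟩, hdC⟩ := hd
  calc (X₁ ++ X₂ ++ [(b, true)] ++ Yw ++ [(b, false)]) ::ₘ C
    _ ≈c (X₂ ++ X₁ ++ [(d, true)] ++ Yw ++ [(d, false)]) ::ₘ C :=
      .reconnect_of_ne (Ne.symm hdb) hbX₁ hbX₂ hbY hbC hdX₁ hdX₂ hdY hdC
    _ ≈c (X₂ ++ X₁ ++ [(c, true)] ++ Yw ++ [(c, false)]) ::ₘ C := by
      simpa using CellEquiv.reconnect_of_ne (X₁ := X₂ ++ X₁) (X₂ := []) hdc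
        (by simp [hdX₁, hdX₂]) (occursW_nil d) hdY hdC
        (by simp [hcX₁, hcX₂]) (occursW_nil c) hcY hcC

/-- In a cell complex, a face with boundary `(X₁ X₂ b Y b⁻¹)` is
equivalent to a face with boundary `(X₂ X₁ c Y c⁻¹)` for a fresh edge `c`: the two
boundary components `X₁X₂` and `Y` may be reconnected after an arbitrary cyclic
permutation of `X₁X₂`. -/
theorem reconnect_boundary_components (X₁ X₂ Yw : CWord) (b c : ℕ) (C : PreCell)
    (hval : IsCellComplex ((X₁ ++ X₂ ++ [(b, true)] ++ Yw ++ [(b, false)]) ::ₘ C))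
    (hbX₁ : ¬ occursW b X₁) (hbX₂ : ¬ occursW b X₂) (hbY : ¬ occursW b Yw)
    (hbC : ¬ occursC b C)
    (hcX₁ : ¬ occursW c X₁) (hcX₂ : ¬ occursW c X₂) (hcY : ¬ occursW c Yw)
    (hcC : ¬ occursC c C) :
    CellEquiv ((X₁ ++ X₂ ++ [(b, true)] ++ Yw ++ [(b, false)]) ::ₘ C)
      ((X₂ ++ X₁ ++ [(c, true)] ++ Yw ++ [(c, false)]) ::ₘ C) :=
  reconnect_boundary_components_general X₁ X₂ Yw b c C hbX₁ hbX₂ hbY hbC hcX₁ hcX₂ hcY hcC
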